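/- arXiv:math/0102014 — 2 statements merged into one kernel-verified Lean document; each statement's English description precedes it below -/
import Mathlib

section
/- If g₁ and g₂ are characteristically nilpotent Lie S-algebras, then their product by generators g₁ ×̲ g₂ is a characteristically nilpotent (and nonsplit) Lie algebra. -/
/-!
Write `L = g1 ⊕ g2 ⊕ V` with `V = ℂ^(n1 n2)` central and `⁅x, y⁆ = Φ x y` for `x ∈ g1`, `y ∈ g2`.

A derivation `D` of `L` has diagonal blocks that are derivations of `g1` and `g2`; by the
S-property its blocks `g1 → g2` and `g2 → g1` land in the derived algebras, which `Φ` kills, so on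
`[g1, g1]` and `[g2, g2]` only the diagonal blocks survive. Hence every derivation shifts, in turn,
the filtrations `(g1^{[k]} + [g1, g1]) ⊕ (g2^{[k]} + [g2, g2]) ⊕ V`, then
`[g1, g1] ⊕ [g2, g2] ⊕ V_k` with `V_k` spanned by the `Φ(g1^{[a]}, g2^{[b]})`, `a + b = k`, and
finally `([g1, g1] ∩ g1^{[k]}) ⊕ ([g2, g2] ∩ g2^{[k]})`. This gives `L^{[m]} = 0`.

A splitting `L = I ⊕ J` into ideals makes the projection `π` onto `I` an idempotent of the
centroid. Since `Φ` pairs the generators universally, `π` acts on `V` by a scalar `μ ∈ {0, 1}`.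
If `μ = 0`, the diagonal blocks of `π` are centroid maps of the nilpotent `g1`, `g2` with image
in the derived algebras, hence nilpotent, and idempotency forces `π = 0`; if `μ = 1`, the same
applies to `1 - π`. So `I = 0` or `J = 0`.
-/

open Module

noncomputable section

/-- Direct sum (product) of two Lie rings. -/
instance prodLieRing (L L' : Type*) [LieRing L] [LieRing L'] : LieRing (L × L') where
  bracket p q := (⁅p.1, q.1⁆, ⁅p.2, q.2⁆)
  add_lie x y z := Prod.ext (add_lie x.1 y.1 z.1) (add_lie x.2 y.2 z.2)
  lie_add x y z := Prod.ext (lie_add x.1 y.1 z.1) (lie_add x.2 y.2 z.2)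
  lie_self x := Prod.ext (lie_self x.1) (lie_self x.2)
  leibniz_lie x y z := Prod.ext (leibniz_lie x.1 y.1 z.1) (leibniz_lie x.2 y.2 z.2)

instance prodLieAlgebra (R L L' : Type*) [CommRing R] [LieRing L] [LieRing L']
    [LieAlgebra R L] [LieAlgebra R L'] : LieAlgebra R (L × L') where
  lie_smul t x y := Prod.ext (lie_smul t x.1 y.1) (lie_smul t x.2 y.2)

/-- A Lie algebra is nonsplit if it is not the direct sum of two nonzero ideals. -/
def LieAlgebra.Nonsplit (R L : Type*) [CommRing R] [LieRing L] [LieAlgebra R L] : Prop :=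
  ¬ ∃ I J : LieIdeal R L, I ≠ ⊥ ∧ J ≠ ⊥ ∧ I ⊓ J = ⊥ ∧ I ⊔ J = ⊤

/-- `g` is nonabelian: some bracket is nonzero. -/
def LieAlgebra.Nonabelian (L : Type*) [LieRing L] : Prop := ∃ x y : L, ⁅x, y⁆ ≠ 0

/-- `L` is the product by generators `g1 ×̲ g2`: the central extension of `g1 ⊕ g2`
by `ℂ^(n1 n2)` given by the cocycle pairing the generators of `g1` with those of `g2`. -/
structure IsProductByGenerators
    (L g1 g2 : Type*) [LieRing L] [LieAlgebra ℂ L]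
    [LieRing g1] [LieAlgebra ℂ g1] [LieRing g2] [LieAlgebra ℂ g2] where
  m1 : ℕ
  m2 : ℕ
  n1 : ℕ
  n2 : ℕ
  two_le_n1 : 2 ≤ n1
  two_le_n2 : 2 ≤ n2
  n1_le : n1 ≤ m1
  n2_le : n2 ≤ m2
  /-- an adapted basis of `g1` -/
  b1 : Basis (Fin m1) ℂ g1
  /-- an adapted basis of `g2` -/
  b2 : Basis (Fin m2) ℂ g2
  /-- the first `n1` basis vectors generate `g1` -/
  gen1 : Submodule.span ℂ (⇑b1 '' {i : Fin m1 | (i : ℕ) < n1}) ⊔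
      (LieAlgebra.derivedSeries ℂ g1 1).toSubmodule = ⊤
  gen2 : Submodule.span ℂ (⇑b2 '' {i : Fin m2 | (i : ℕ) < n2}) ⊔
      (LieAlgebra.derivedSeries ℂ g2 1).toSubmodule = ⊤
  /-- the remaining basis vectors span the derived subalgebra -/
  adapted1 : (LieAlgebra.derivedSeries ℂ g1 1).toSubmodule ≤
      Submodule.span ℂ (⇑b1 '' {i : Fin m1 | n1 ≤ (i : ℕ)})
  adapted2 : (LieAlgebra.derivedSeries ℂ g2 1).toSubmodule ≤
      Submodule.span ℂ (⇑b2 '' {i : Fin m2 | n2 ≤ (i : ℕ)})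
  /-- the cocycle, as a bilinear map `g1 × g2 → ℂ^(n1 n2)` -/
  Φ : g1 →ₗ[ℂ] g2 →ₗ[ℂ] (Fin n1 → Fin n2 → ℂ)
  hΦ : ∀ i j, Φ (b1 i) (b2 j) =
      if h : (i : ℕ) < n1 ∧ (j : ℕ) < n2 then
        Pi.single (⟨i, h.1⟩ : Fin n1) (Pi.single (⟨j, h.2⟩ : Fin n2) (1 : ℂ)) else 0
  /-- the underlying linear identification of `L` with `g1 ⊕ g2 ⊕ ℂ^(n1 n2)` -/
  e : (g1 × g2 × (Fin n1 → Fin n2 → ℂ)) ≃ₗ[ℂ] L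
  bracket_eq : ∀ a a' : g1 × g2 × (Fin n1 → Fin n2 → ℂ),
      ⁅e a, e a'⁆ = e (⁅a.1, a'.1⁆, ⁅a.2.1, a'.2.1⁆, Φ a.1 a'.2.1 - Φ a'.1 a.2.1)

namespace IsProductByGenerators

variable {L g1 g2 : Type*} [LieRing L] [LieAlgebra ℂ L]
  [LieRing g1] [LieAlgebra ℂ g1] [LieRing g2] [LieAlgebra ℂ g2]
  (P : IsProductByGenerators L g1 g2)

/-- inclusion of `g1` -/
def ι₁ (x : g1) : L := P.e (x, 0, 0)
/-- inclusion of `g2` -/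
def ι₂ (y : g2) : L := P.e (0, y, 0)
/-- inclusion of the adjoined center `g3 = ℂ^(n1 n2)` -/
def ι₃ (v : Fin P.n1 → Fin P.n2 → ℂ) : L := P.e (0, 0, v)
/-- projection onto `g1` -/
def p₁ (z : L) : g1 := (P.e.symm z).1
/-- projection onto `g2` -/
def p₂ (z : L) : g2 := (P.e.symm z).2.1
/-- projection onto `g3` -/
def p₃ (z : L) : Fin P.n1 → Fin P.n2 → ℂ := (P.e.symm z).2.2

/-- the component `Dᵢⱼ = pᵢ ∘ D ∘ ιⱼ` of an endomorphism of the product. -/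
def D11 (D : L →ₗ[ℂ] L) (x : g1) : g1 := P.p₁ (D (P.ι₁ x))
def D21 (D : L →ₗ[ℂ] L) (x : g1) : g2 := P.p₂ (D (P.ι₁ x))
def D31 (D : L →ₗ[ℂ] L) (x : g1) : Fin P.n1 → Fin P.n2 → ℂ := P.p₃ (D (P.ι₁ x))
def D12 (D : L →ₗ[ℂ] L) (y : g2) : g1 := P.p₁ (D (P.ι₂ y))
def D22 (D : L →ₗ[ℂ] L) (y : g2) : g2 := P.p₂ (D (P.ι₂ y))
def D32 (D : L →ₗ[ℂ] L) (y : g2) : Fin P.n1 → Fin P.n2 → ℂ := P.p₃ (D (P.ι₂ y))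
def D13 (D : L →ₗ[ℂ] L) (v : Fin P.n1 → Fin P.n2 → ℂ) : g1 := P.p₁ (D (P.ι₃ v))
def D23 (D : L →ₗ[ℂ] L) (v : Fin P.n1 → Fin P.n2 → ℂ) : g2 := P.p₂ (D (P.ι₃ v))
def D33 (D : L →ₗ[ℂ] L) (v : Fin P.n1 → Fin P.n2 → ℂ) : Fin P.n1 → Fin P.n2 → ℂ :=
  P.p₃ (D (P.ι₃ v))

end IsProductByGenerators

/-- `IsDerivation D`: `D` satisfies the Leibniz rule. -/
def IsDerivation {L : Type*} [LieRing L] [LieAlgebra ℂ L] (D : L →ₗ[ℂ] L) : Prop :=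
  ∀ x y : L, D ⁅x, y⁆ = ⁅D x, y⁆ + ⁅x, D y⁆

/-- the descending sequence `g^{[k]}`, with `g^{[1]} = Der(g)(g)`,
`g^{[k+1]} = Der(g)(g^{[k]})`. -/
def derPow (g : Type*) [LieRing g] [LieAlgebra ℂ g] : ℕ → Submodule ℂ g
  | 0 => ⊤
  | k + 1 => Submodule.span ℂ
      {x | ∃ D : g →ₗ[ℂ] g, IsDerivation D ∧ ∃ y ∈ derPow g k, x = D y}

/-- characteristically nilpotent: `g^{[m]} = 0` for some `m`. -/
def CharacteristicallyNilpotent (g : Type*) [LieRing g] [LieAlgebra ℂ g] : Prop :=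
  ∃ m, 1 ≤ m ∧ derPow g m = ⊥

/-- An S-algebra: for any Lie algebra `g2` and any derivation `D` of `g1 ×̲ g2`,
the component `D₂₁ = p₂ ∘ D ∘ p₁` maps `g1` into `[g2, g2]`. -/
def IsSAlgebra (g1 : Type) [LieRing g1] [LieAlgebra ℂ g1] : Prop :=
  ∀ (g2 L : Type) (_ : LieRing g2) (_ : LieAlgebra ℂ g2) (_ : LieRing L)
    (_ : LieAlgebra ℂ L) (P : IsProductByGenerators L g1 g2) (D : L →ₗ[ℂ] L),
    IsDerivation D → ∀ x : g1, P.D21 D x ∈ LieAlgebra.derivedSeries ℂ g2 1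

/-- nilpotency index: smallest `k` with `C^k g = 0` (`C¹g = [g,g]`). -/
noncomputable def nilindex (g : Type*) [LieRing g] [LieAlgebra ℂ g] : ℕ :=
  sInf {k | LieModule.lowerCentralSeries ℂ g g k = ⊥}

/-- dimension as complex vector space -/
def fdim (g : Type*) [LieRing g] [LieAlgebra ℂ g] : ℕ := finrank ℂ g

/-- dimension of the center -/
def zdim (g : Type*) [LieRing g] [LieAlgebra ℂ g] : ℕ :=
  finrank ℂ (LieAlgebra.center ℂ g).toSubmodule

/-- dimension of the derived subalgebra `C¹g = [g,g]` -/
def ddim (g : Type*) [LieRing g] [LieAlgebra ℂ g] : ℕ :=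
  finrank ℂ (LieAlgebra.derivedSeries ℂ g 1).toSubmodule

/-- minimal number of generators of a nilpotent Lie algebra: `dim g/[g,g]` -/
def gdim (g : Type*) [LieRing g] [LieAlgebra ℂ g] : ℕ :=
  finrank ℂ (g ⧸ (LieAlgebra.derivedSeries ℂ g 1).toSubmodule)

def FinDim (g : Type*) [LieRing g] [LieAlgebra ℂ g] : Prop := FiniteDimensional ℂ g

/-- existence of a Lie algebra isomorphism -/
def LieIso (L L' : Type*) [LieRing L] [LieAlgebra ℂ L] [LieRing L'] [LieAlgebra ℂ L'] : Prop :=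
  Nonempty (L ≃ₗ⁅ℂ⁆ L')

open Submodule LieAlgebra

local notation "C¹" g:max => LieSubmodule.toSubmodule (LieAlgebra.derivedSeries ℂ g 1)

section Generic

variable {g : Type*} [LieRing g] [LieAlgebra ℂ g]

theorem derivedSeries_one_eq_span :
    C¹ g = span ℂ {⁅x, y⁆ | (x : g) (y : g)} :=
  coe_derivedSeries_one_eq ℂ g

theorem lie_mem_derivedSeries_one (x y : g) : ⁅x, y⁆ ∈ C¹ g := by
  rw [derivedSeries_one_eq_span]; exact subset_span ⟨x, y, rfl⟩

theorem IsDerivation.map_mem_derivedSeries_one {D : g →ₗ[ℂ] g} (hD : IsDerivation D) {x : g}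
    (hx : x ∈ C¹ g) : D x ∈ C¹ g := by
  rw [derivedSeries_one_eq_span] at hx
  refine (span_le (p := (C¹ g).comap D)).2 ?_ hx
  rintro _ ⟨a, b, rfl⟩
  change D ⁅a, b⁆ ∈ C¹ g
  exact hD a b ▸ add_mem (lie_mem_derivedSeries_one _ _) (lie_mem_derivedSeries_one _ _)

@[simp] theorem derPow_zero : derPow g 0 = ⊤ := rfl

theorem IsDerivation.mem_derPow_succ {D : g →ₗ[ℂ] g} (hD : IsDerivation D) {k : ℕ} {y : g}
    (hy : y ∈ derPow g k) : D y ∈ derPow g (k + 1) :=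
  subset_span ⟨D, hD, y, hy, rfl⟩

theorem derPow_succ_le : ∀ k, derPow g (k + 1) ≤ derPow g k
  | 0 => le_top
  | k + 1 => span_le.2 fun _ ⟨_, hD, _, hy, hxy⟩ => hxy ▸ hD.mem_derPow_succ (derPow_succ_le k hy)

theorem derPow_antitone : Antitone (derPow g) :=
  antitone_nat_of_succ_le derPow_succ_le

theorem derPow_eq_bot_of_le {m k : ℕ} (h : derPow g m = ⊥) (hmk : m ≤ k) : derPow g k = ⊥ :=
  le_bot_iff.1 (h ▸ derPow_antitone hmk)

theorem derPow_add_le {F : ℕ → Submodule ℂ g}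
    (hF : ∀ k D, IsDerivation D → F k ≤ (F (k + 1)).comap D) {a : ℕ} (ha : derPow g a ≤ F 0) :
    ∀ k, derPow g (a + k) ≤ F k
  | 0 => ha
  | k + 1 => span_le.2 fun _ ⟨D, hD, _, hy, hxy⟩ => hxy ▸ hF k D hD (derPow_add_le hF ha k hy)

end Generic

def IsCentroid {R g : Type*} [CommRing R] [LieRing g] [LieAlgebra R g] (f : g →ₗ[R] g) : Prop :=
  ∀ x y, f ⁅x, y⁆ = ⁅f x, y⁆

namespace IsCentroid

variable {R g : Type*} [CommRing R] [LieRing g] [LieAlgebra R g] {f : g →ₗ[R] g}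

theorem map_lie_right (hf : IsCentroid f) (x y : g) : f ⁅x, y⁆ = ⁅x, f y⁆ := by
  rw [← lie_skew, map_neg, hf, lie_skew]

theorem one_sub (hf : IsCentroid f) : IsCentroid (1 - f) := fun x y => by
  simp [hf x y, sub_lie]

theorem map_mem_lowerCentralSeries_succ (hf : IsCentroid f)
    (himg : ∀ x, f x ∈ derivedSeries R g 1) :
    ∀ k, ∀ x ∈ LieModule.lowerCentralSeries R g g k,
      f x ∈ LieModule.lowerCentralSeries R g g (k + 1)
  | 0, x, _ => LieModule.derivedSeries_le_lowerCentralSeries R g 1 (himg x)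
  | k + 1, x, hx => by
    rw [← LieSubmodule.mem_toSubmodule, LieModule.lowerCentralSeries_succ,
      LieSubmodule.lieIdeal_oper_eq_linear_span'] at hx
    refine (span_le (p := (LieModule.lowerCentralSeries R g g (k + 2)).toSubmodule.comap f)).2
      ?_ hx
    rintro _ ⟨a, -, n, hn, rfl⟩
    rw [SetLike.mem_coe, mem_comap, hf.map_lie_right, LieSubmodule.mem_toSubmodule,
      LieModule.lowerCentralSeries_succ]
    exact LieSubmodule.lie_mem_lie (LieSubmodule.mem_top a)
      (hf.map_mem_lowerCentralSeries_succ himg k n hn)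

theorem isNilpotent [LieRing.IsNilpotent g] (hf : IsCentroid f)
    (himg : ∀ x, f x ∈ derivedSeries R g 1) : IsNilpotent f := by
  have pow_mem : ∀ k x, (f ^ k) x ∈ LieModule.lowerCentralSeries R g g k := by
    intro k
    induction k with
    | zero => simp
    | succ k ih => exact fun x => pow_succ' f k ▸ hf.map_mem_lowerCentralSeries_succ himg k _ (ih x)
  obtain ⟨K, hK⟩ := LieModule.IsNilpotent.nilpotent R g g
  exact ⟨K, LinearMap.ext fun x => by simpa [hK] using pow_mem K x⟩

theorem eq_zero_of_apply_eq_self [LieRing.IsNilpotent g] (hf : IsCentroid f)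
    (himg : ∀ x, f x ∈ derivedSeries R g 1) {x : g} (hx : f x = x) : x = 0 := by
  have h1f := ((Module.End.isUnit_iff _).1 (hf.isNilpotent himg).isUnit_one_sub).1
  exact h1f (by simp [hx])

end IsCentroid

theorem LieIdeal.isCentroid_projection {R L : Type*} [CommRing R] [LieRing L] [LieAlgebra R L]
    {I J : LieIdeal R L} (h : IsCompl I.toSubmodule J.toSubmodule) :
    IsCentroid (I.toSubmodule.projection J.toSubmodule h) := fun z w => by
  conv_lhs => rw [← projection_add_projection_eq_self h z]
  rw [add_lie, map_add,
    projection_apply_of_mem_left h (lie_mem_left R L I _ _ (projection_apply_mem h z)),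
    projection_apply_of_mem_right h (lie_mem_left R L J _ _ (projection_apply_mem h.symm z)),
    add_zero]

theorem Module.Basis.span_image_eq_of_sup_eq_top {R ι M : Type*} [Ring R] [AddCommGroup M]
    [Module R M] (b : Basis ι R M) {s t : Set ι} (hst : Disjoint s t) {C : Submodule R M}
    (hgen : span R (b '' t) ⊔ C = ⊤) (hC : C ≤ span R (b '' s)) : span R (b '' s) = C := by
  refine le_antisymm (fun w hw => ?_) hC
  obtain ⟨u, hu, c, hc, rfl⟩ := mem_sup.1 (hgen ▸ mem_top : w ∈ span R (b '' t) ⊔ C)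
  have hu' : u ∈ span R (b '' s) := by simpa using sub_mem hw (hC hc)
  have hu0 : u = 0 := (b.linearIndependent.disjoint_span_image hst).le_bot ⟨hu', hu⟩
  simpa [hu0] using hc

def LinearEquiv.piComm (R ι κ : Type*) [Semiring R] : (ι → κ → R) ≃ₗ[R] (κ → ι → R) :=
  { Equiv.piComm fun _ _ => R with map_add' := fun _ _ => rfl, map_smul' := fun _ _ => rfl }

@[simp] theorem LinearEquiv.piComm_apply {R ι κ : Type*} [Semiring R] (f : ι → κ → R) (k : κ)
    (i : ι) : LinearEquiv.piComm R ι κ f k i = f i k := rfl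

@[simp] theorem LinearEquiv.piComm_piComm {R ι κ : Type*} [Semiring R] (f : ι → κ → R) :
    LinearEquiv.piComm R κ ι (LinearEquiv.piComm R ι κ f) = f := rfl

namespace IsProductByGenerators

variable {L g1 g2 : Type*} [LieRing L] [LieAlgebra ℂ L]
  [LieRing g1] [LieAlgebra ℂ g1] [LieRing g2] [LieAlgebra ℂ g2]
  (P : IsProductByGenerators L g1 g2)

def inc₁ : g1 →ₗ[ℂ] L := P.e.toLinearMap ∘ₗ LinearMap.inl ℂ _ _
def inc₂ : g2 →ₗ[ℂ] L := P.e.toLinearMap ∘ₗ LinearMap.inr ℂ _ _ ∘ₗ LinearMap.inl ℂ _ _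
def inc₃ : (Fin P.n1 → Fin P.n2 → ℂ) →ₗ[ℂ] L :=
  P.e.toLinearMap ∘ₗ LinearMap.inr ℂ _ _ ∘ₗ LinearMap.inr ℂ _ _

@[simp] theorem coe_inc₁ : ⇑P.inc₁ = P.ι₁ := rfl
@[simp] theorem coe_inc₃ : ⇑P.inc₃ = P.ι₃ := rfl

def D11ₗ (T : L →ₗ[ℂ] L) : g1 →ₗ[ℂ] g1 :=
  LinearMap.fst ℂ _ _ ∘ₗ P.e.symm.toLinearMap ∘ₗ T ∘ₗ P.inc₁
def D21ₗ (T : L →ₗ[ℂ] L) : g1 →ₗ[ℂ] g2 :=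
  LinearMap.fst ℂ _ _ ∘ₗ LinearMap.snd ℂ _ _ ∘ₗ P.e.symm.toLinearMap ∘ₗ T ∘ₗ P.inc₁
def D22ₗ (T : L →ₗ[ℂ] L) : g2 →ₗ[ℂ] g2 :=
  LinearMap.fst ℂ _ _ ∘ₗ LinearMap.snd ℂ _ _ ∘ₗ P.e.symm.toLinearMap ∘ₗ T ∘ₗ P.inc₂

@[simp] theorem coe_D11ₗ (T : L →ₗ[ℂ] L) : ⇑(P.D11ₗ T) = P.D11 T := rfl
@[simp] theorem coe_D21ₗ (T : L →ₗ[ℂ] L) : ⇑(P.D21ₗ T) = P.D21 T := rfl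

theorem apply_ι₁ (T : L →ₗ[ℂ] L) (x : g1) :
    T (P.ι₁ x) = P.e (P.D11 T x, P.D21 T x, P.D31 T x) :=
  (P.e.apply_symm_apply _).symm

theorem apply_ι₂ (T : L →ₗ[ℂ] L) (y : g2) :
    T (P.ι₂ y) = P.e (P.D12 T y, P.D22 T y, P.D32 T y) :=
  (P.e.apply_symm_apply _).symm

theorem e_eq_add (x : g1) (y : g2) (v : Fin P.n1 → Fin P.n2 → ℂ) :
    P.e (x, y, v) = P.ι₁ x + P.ι₂ y + P.ι₃ v := by
  simp only [ι₁, ι₂, ι₃, ← map_add, Prod.mk_add_mk, add_zero, zero_add]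

theorem eq_add (z : L) : z = P.ι₁ (P.p₁ z) + P.ι₂ (P.p₂ z) + P.ι₃ (P.p₃ z) := by
  rw [← e_eq_add]; exact (P.e.apply_symm_apply z).symm

@[simp] theorem ι₃_zero : P.ι₃ 0 = 0 :=
  map_zero P.inc₃

theorem ι₃_injective : Function.Injective P.ι₃ := fun v w h => by
  simpa using P.e.injective h

theorem lie_ι₁_ι₁ (x x' : g1) : ⁅P.ι₁ x, P.ι₁ x'⁆ = P.ι₁ ⁅x, x'⁆ := by
  simp [ι₁, P.bracket_eq]

theorem lie_ι₁_ι₂ (x : g1) (y : g2) : ⁅P.ι₁ x, P.ι₂ y⁆ = P.ι₃ (P.Φ x y) := by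
  simp [ι₁, ι₂, ι₃, P.bracket_eq]

theorem Φ_apply (x : g1) (y : g2) (r : Fin P.n1) (s : Fin P.n2) :
    P.Φ x y r s = P.b1.repr x (Fin.castLE P.n1_le r) * P.b2.repr y (Fin.castLE P.n2_le s) := by
  have h := LinearMap.ext_basis P.b1 P.b2
    (B := P.Φ.compr₂ (LinearMap.proj s ∘ₗ LinearMap.proj r))
    (B' := (LinearMap.mul ℂ ℂ).compl₁₂ (P.b1.coord (Fin.castLE P.n1_le r))
      (P.b2.coord (Fin.castLE P.n2_le s))) fun i j => by
    simp only [LinearMap.compr₂_apply, LinearMap.compl₁₂_apply, P.hΦ, Basis.coord_apply,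
      Basis.repr_self, LinearMap.mul_apply']
    split_ifs with h
    · simp only [LinearMap.coe_comp, Function.comp_apply, LinearMap.coe_proj,
        Function.eval, Pi.single_apply, Finsupp.single_apply, Fin.ext_iff, Fin.val_castLE]
      split_ifs <;> simp_all [Fin.ext_iff]
    · simp only [LinearMap.coe_comp, LinearMap.coe_proj, Function.comp_apply, Function.eval,
        Pi.zero_apply, Finsupp.single_apply, Fin.ext_iff, Fin.val_castLE, mul_ite, mul_one,
        mul_zero, right_eq_ite_iff, zero_ne_one, imp_false]
      omega
  exact LinearMap.congr_fun₂ h x y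

theorem Φ_eq_zero_of_mem_right {y : g2} (hy : y ∈ C¹ g2) (x : g1) : P.Φ x y = 0 := by
  have hsupp := (P.b2.mem_span_image).1 (P.adapted2 hy)
  ext r s
  have hs : P.b2.repr y (Fin.castLE P.n2_le s) = 0 := by
    by_contra h
    have := hsupp (Finsupp.mem_support_iff.2 h)
    simp only [Set.mem_ofPred_eq, Fin.val_castLE] at this
    omega
  simp [Φ_apply, hs]

theorem mem_derivedSeries_one_of_Φ_eq_zero {x : g1} (hx : P.Φ x = 0) : x ∈ C¹ g1 := by
  have hdisj : Disjoint {i : Fin P.m1 | P.n1 ≤ i} {i | i < P.n1} :=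
    Set.disjoint_left.2 fun i h h' => by simp only [Set.mem_ofPred_eq] at h h'; omega
  rw [← P.b1.span_image_eq_of_sup_eq_top hdisj P.gen1 P.adapted1, P.b1.mem_span_image]
  intro i hi
  by_contra hlt
  have hn2 : 0 < P.n2 := by have := P.two_le_n2; omega
  have h := congr_fun₂ (LinearMap.congr_fun hx (P.b2 (Fin.castLE P.n2_le ⟨0, hn2⟩)))
    ⟨i, by simpa using hlt⟩ ⟨0, hn2⟩
  simp only [Fin.castLE_mk, Φ_apply, Fin.eta, Basis.repr_self, Finsupp.single_eq_same, mul_one,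
    LinearMap.zero_apply, Pi.zero_apply] at h
  exact (Finsupp.mem_support_iff.1 hi) h

theorem span_Φ_eq_top : span ℂ {v | ∃ x y, P.Φ x y = v} = ⊤ := by
  refine eq_top_iff.2 fun v _ => ?_
  have hv : v = ∑ r, ∑ s,
      v r s • P.Φ (P.b1 (Fin.castLE P.n1_le r)) (P.b2 (Fin.castLE P.n2_le s)) := by
    ext r s
    simp [Φ_apply, Finset.sum_apply, Finsupp.single_apply, Fin.castLE_inj]
  rw [hv]
  exact sum_mem fun r _ => sum_mem fun s _ => smul_mem _ _ (subset_span ⟨_, _, rfl⟩)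

def swapEquiv :
    (g2 × g1 × (Fin P.n2 → Fin P.n1 → ℂ)) ≃ₗ[ℂ] (g1 × g2 × (Fin P.n1 → Fin P.n2 → ℂ)) where
  toFun a := (a.2.1, a.1, -LinearEquiv.piComm ℂ _ _ a.2.2)
  invFun a := (a.2.1, a.1, -LinearEquiv.piComm ℂ _ _ a.2.2)
  map_add' a a' := by simp [add_comm]
  map_smul' c a := by simp
  left_inv a := by simp
  right_inv a := by simp

theorem swapEquiv_apply (a : g2 × g1 × (Fin P.n2 → Fin P.n1 → ℂ)) :
    P.swapEquiv a = (a.2.1, a.1, -LinearEquiv.piComm ℂ _ _ a.2.2) := rfl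

/-- The same algebra read as `g2 ×̲ g1`: statements about the first factor transfer to the second
through it. -/
def swap : IsProductByGenerators L g2 g1 where
  m1 := P.m2
  m2 := P.m1
  n1 := P.n2
  n2 := P.n1
  two_le_n1 := P.two_le_n2
  two_le_n2 := P.two_le_n1
  n1_le := P.n2_le
  n2_le := P.n1_le
  b1 := P.b2
  b2 := P.b1
  gen1 := P.gen2
  gen2 := P.gen1
  adapted1 := P.adapted2
  adapted2 := P.adapted1
  Φ := P.Φ.flip.compr₂ (LinearEquiv.piComm ℂ _ _).toLinearMap
  hΦ j i := by
    ext s r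
    simp only [LinearMap.compr₂_apply, LinearMap.flip_apply, LinearEquiv.coe_coe]
    rw [P.hΦ]
    by_cases h : (i : ℕ) < P.n1 ∧ (j : ℕ) < P.n2
    · rw [dif_pos h, dif_pos h.symm]
      simp only [LinearEquiv.piComm_apply, Pi.single_apply]
      split_ifs <;> simp_all
    · rw [dif_neg h, dif_neg (by tauto)]
      rfl
  e := P.swapEquiv.trans P.e
  bracket_eq a a' := by
    simp only [LinearEquiv.trans_apply, P.bracket_eq, swapEquiv_apply]
    congr 1
    ext <;> simp

theorem swap_ι₁ (y : g2) : P.swap.ι₁ y = P.ι₂ y := by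
  change P.e (P.swapEquiv (y, 0, 0)) = P.e (0, y, 0)
  simp [swapEquiv_apply]

theorem swap_D11 (T : L →ₗ[ℂ] L) (y : g2) : P.swap.D11 T y = P.D22 T y := by
  simp only [D11, D22, swap_ι₁]; rfl

theorem swap_D21 (T : L →ₗ[ℂ] L) (y : g2) : P.swap.D21 T y = P.D12 T y := by
  simp only [D21, D12, swap_ι₁]; rfl

theorem swap_D11ₗ (T : L →ₗ[ℂ] L) : P.swap.D11ₗ T = P.D22ₗ T :=
  LinearMap.ext (P.swap_D11 T)

section Derivation

variable {P} {D : L →ₗ[ℂ] L}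

theorem derivation_apply_ι₁_lie (hD : IsDerivation D) (x x' : g1) :
    D (P.ι₁ ⁅x, x'⁆) = P.e (⁅P.D11 D x, x'⁆ + ⁅x, P.D11 D x'⁆, 0,
      P.Φ x (P.D21 D x') - P.Φ x' (P.D21 D x)) := by
  rw [← lie_ι₁_ι₁, hD, apply_ι₁, apply_ι₁]
  simp only [ι₁, P.bracket_eq, ← map_add]
  congr 1
  ext <;> simp only [lie_zero, map_zero, zero_sub, zero_lie, sub_zero, Prod.mk_add_mk, add_zero,
    Pi.add_apply, Pi.neg_apply, Pi.sub_apply]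
  abel

theorem isDerivation_D11ₗ (hD : IsDerivation D) : IsDerivation (P.D11ₗ D) := fun x x' => by
  simp [D11, p₁, derivation_apply_ι₁_lie hD]

theorem isDerivation_D22ₗ (hD : IsDerivation D) : IsDerivation (P.D22ₗ D) :=
  P.swap_D11ₗ D ▸ isDerivation_D11ₗ hD

theorem derivation_apply_ι₁_of_mem (hD : IsDerivation D) (hS : ∀ x, P.D21 D x ∈ C¹ g2)
    {x : g1} (hx : x ∈ C¹ g1) : D (P.ι₁ x) = P.ι₁ (P.D11 D x) := by
  rw [derivedSeries_one_eq_span] at hx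
  refine LinearMap.eqOn_span (f := D ∘ₗ P.inc₁) (g := P.inc₁ ∘ₗ P.D11ₗ D) ?_ hx
  rintro _ ⟨a, b, rfl⟩
  have h := isDerivation_D11ₗ (P := P) hD a b
  simp only [LinearMap.coe_comp, Function.comp_apply, coe_inc₁, coe_D11ₗ] at h ⊢
  rw [derivation_apply_ι₁_lie hD, h, Φ_eq_zero_of_mem_right _ (hS _),
    Φ_eq_zero_of_mem_right _ (hS _), sub_self]
  rfl

theorem derivation_apply_ι₂_of_mem (hD : IsDerivation D) (hS : ∀ y, P.D12 D y ∈ C¹ g1)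
    {y : g2} (hy : y ∈ C¹ g2) : D (P.ι₂ y) = P.ι₂ (P.D22 D y) := by
  simpa [swap_ι₁, swap_D11] using
    derivation_apply_ι₁_of_mem (P := P.swap) hD (fun y => by simpa [swap_D21] using hS y) hy

theorem derivation_apply_ι₃_Φ (hD : IsDerivation D) (x : g1) (y : g2) :
    D (P.ι₃ (P.Φ x y)) = P.e (⁅x, P.D12 D y⁆, ⁅P.D21 D x, y⁆,
      P.Φ (P.D11 D x) y + P.Φ x (P.D22 D y)) := by
  rw [← lie_ι₁_ι₂, hD, apply_ι₁, apply_ι₂]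
  simp only [ι₁, ι₂, P.bracket_eq, ← map_add]
  congr 1
  ext <;> simp

end Derivation

section Filtration

variable {P} {U₁ U₁' : Submodule ℂ g1} {U₂ U₂' : Submodule ℂ g2}
  {U₃ U₃' : Submodule ℂ (Fin P.n1 → Fin P.n2 → ℂ)}

variable (P) in
def block (U₁ : Submodule ℂ g1) (U₂ : Submodule ℂ g2)
    (U₃ : Submodule ℂ (Fin P.n1 → Fin P.n2 → ℂ)) : Submodule ℂ L :=
  U₁.map P.inc₁ ⊔ U₂.map P.inc₂ ⊔ U₃.map P.inc₃

theorem e_mem_block {x : g1} {y : g2} {v : Fin P.n1 → Fin P.n2 → ℂ} (hx : x ∈ U₁) (hy : y ∈ U₂)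
    (hv : v ∈ U₃) : P.e (x, y, v) ∈ P.block U₁ U₂ U₃ := by
  rw [e_eq_add]
  exact add_mem (add_mem (mem_sup_left (mem_sup_left (mem_map_of_mem hx)))
    (mem_sup_left (mem_sup_right (mem_map_of_mem hy)))) (mem_sup_right (mem_map_of_mem hv))

theorem ι₁_mem_block {x : g1} (hx : x ∈ U₁) : P.ι₁ x ∈ P.block U₁ U₂ U₃ :=
  e_mem_block hx (zero_mem _) (zero_mem _)

theorem ι₂_mem_block {y : g2} (hy : y ∈ U₂) : P.ι₂ y ∈ P.block U₁ U₂ U₃ :=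
  e_mem_block (zero_mem _) hy (zero_mem _)

theorem block_mono (h₁ : U₁ ≤ U₁') (h₂ : U₂ ≤ U₂') (h₃ : U₃ ≤ U₃') :
    P.block U₁ U₂ U₃ ≤ P.block U₁' U₂' U₃' :=
  sup_le_sup (sup_le_sup (map_mono h₁) (map_mono h₂)) (map_mono h₃)

theorem block_le_comap {T : L →ₗ[ℂ] L} {W : Submodule ℂ L} (h₁ : U₁ ≤ W.comap (T ∘ₗ P.inc₁))
    (h₂ : U₂ ≤ W.comap (T ∘ₗ P.inc₂)) (h₃ : U₃ ≤ W.comap (T ∘ₗ P.inc₃)) :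
    P.block U₁ U₂ U₃ ≤ W.comap T := by
  simp only [block, sup_le_iff, map_le_iff_le_comap, ← comap_comp]
  exact ⟨⟨h₁, h₂⟩, h₃⟩

@[simp] theorem block_top : P.block ⊤ ⊤ ⊤ = ⊤ :=
  eq_top_iff.2 fun z _ => P.eq_add z ▸ P.e_eq_add _ _ _ ▸ e_mem_block mem_top mem_top mem_top

@[simp] theorem block_bot : P.block ⊥ ⊥ ⊥ = ⊥ := by
  simp [block]

variable (P) in
def cocycleFiltration (k : ℕ) : Submodule ℂ (Fin P.n1 → Fin P.n2 → ℂ) :=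
  span ℂ {v | ∃ a b, a + b = k ∧ ∃ x ∈ derPow g1 a, ∃ y ∈ derPow g2 b, P.Φ x y = v}

@[simp] theorem cocycleFiltration_zero : P.cocycleFiltration 0 = ⊤ :=
  eq_top_iff.2 <| P.span_Φ_eq_top.ge.trans <| span_mono
    fun _ ⟨x, y, hv⟩ => ⟨0, 0, rfl, x, mem_top, y, mem_top, hv⟩

theorem cocycleFiltration_eq_bot {m₁ m₂ : ℕ} (h₁ : derPow g1 m₁ = ⊥) (h₂ : derPow g2 m₂ = ⊥) :
    P.cocycleFiltration (m₁ + m₂) = ⊥ := by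
  refine eq_bot_iff.2 (span_le.2 ?_)
  rintro _ ⟨a, b, hab, x, hx, y, hy, rfl⟩
  rcases le_or_gt m₁ a with ha | ha
  · rw [derPow_eq_bot_of_le h₁ ha, mem_bot] at hx
    simp [hx]
  · rw [derPow_eq_bot_of_le h₂ (by omega : m₂ ≤ b), mem_bot] at hy
    simp [hy]

variable {D : L →ₗ[ℂ] L} (hD : IsDerivation D)
include hD

theorem derivation_apply_ι₃_mem {k : ℕ} {v : Fin P.n1 → Fin P.n2 → ℂ}
    (hv : v ∈ P.cocycleFiltration k) :
    D (P.ι₃ v) ∈ P.block (C¹ g1) (C¹ g2) (P.cocycleFiltration (k + 1)) := by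
  suffices P.cocycleFiltration k ≤
      (P.block (C¹ g1) (C¹ g2) (P.cocycleFiltration (k + 1))).comap (D ∘ₗ P.inc₃) from this hv
  refine span_le.2 ?_
  rintro _ ⟨a, b, rfl, x, hx, y, hy, rfl⟩
  change D (P.ι₃ (P.Φ x y)) ∈ P.block _ _ _
  rw [derivation_apply_ι₃_Φ hD]
  refine e_mem_block (lie_mem_derivedSeries_one _ _) (lie_mem_derivedSeries_one _ _)
    (add_mem (subset_span ?_) (subset_span ?_))
  · exact ⟨a + 1, b, by omega, _, (isDerivation_D11ₗ hD).mem_derPow_succ hx, y, hy, rfl⟩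
  · exact ⟨a, b + 1, by omega, x, hx, _, (isDerivation_D22ₗ hD).mem_derPow_succ hy, rfl⟩

theorem derivation_apply_ι₁_mem_block (hS₁ : ∀ x, P.D21 D x ∈ C¹ g2) {x : g1} (hx : x ∈ C¹ g1)
    (hU : P.D11 D x ∈ U₁) :
    D (P.ι₁ x) ∈ P.block U₁ U₂ U₃ :=
  derivation_apply_ι₁_of_mem hD hS₁ hx ▸ ι₁_mem_block hU

theorem derivation_apply_ι₂_mem_block (hS₂ : ∀ y, P.D12 D y ∈ C¹ g1) {y : g2} (hy : y ∈ C¹ g2)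
    (hU : P.D22 D y ∈ U₂) :
    D (P.ι₂ y) ∈ P.block U₁ U₂ U₃ :=
  derivation_apply_ι₂_of_mem hD hS₂ hy ▸ ι₂_mem_block hU

variable (hS₁ : ∀ x, P.D21 D x ∈ C¹ g2) (hS₂ : ∀ y, P.D12 D y ∈ C¹ g1)
include hS₁ hS₂

theorem block_derPow_sup_le_comap (k : ℕ) :
    P.block (derPow g1 k ⊔ C¹ g1) (derPow g2 k ⊔ C¹ g2) ⊤ ≤
      (P.block (derPow g1 (k + 1) ⊔ C¹ g1) (derPow g2 (k + 1) ⊔ C¹ g2) ⊤).comap D := by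
  refine block_le_comap (sup_le (fun x hx => ?_) (fun x hx => ?_))
    (sup_le (fun y hy => ?_) (fun y hy => ?_)) fun v _ => ?_
  · change D (P.ι₁ x) ∈ P.block _ _ _
    rw [apply_ι₁]
    exact e_mem_block (mem_sup_left ((isDerivation_D11ₗ hD).mem_derPow_succ hx))
      (mem_sup_right (hS₁ x)) mem_top
  · exact derivation_apply_ι₁_mem_block hD hS₁ hx
      (mem_sup_right ((isDerivation_D11ₗ hD).map_mem_derivedSeries_one hx))
  · change D (P.ι₂ y) ∈ P.block _ _ _
    rw [apply_ι₂]
    exact e_mem_block (mem_sup_right (hS₂ y))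
      (mem_sup_left ((isDerivation_D22ₗ hD).mem_derPow_succ hy)) mem_top
  · exact derivation_apply_ι₂_mem_block hD hS₂ hy
      (mem_sup_right ((isDerivation_D22ₗ hD).map_mem_derivedSeries_one hy))
  · exact block_mono le_sup_right le_sup_right le_top
      (derivation_apply_ι₃_mem hD (P.cocycleFiltration_zero ▸ mem_top))

theorem block_cocycleFiltration_le_comap (k : ℕ) :
    P.block (C¹ g1) (C¹ g2) (P.cocycleFiltration k) ≤
      (P.block (C¹ g1) (C¹ g2) (P.cocycleFiltration (k + 1))).comap D :=
  block_le_comap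
    (fun _ hx => derivation_apply_ι₁_mem_block hD hS₁ hx
      ((isDerivation_D11ₗ hD).map_mem_derivedSeries_one hx))
    (fun _ hy => derivation_apply_ι₂_mem_block hD hS₂ hy
      ((isDerivation_D22ₗ hD).map_mem_derivedSeries_one hy))
    (fun _ hv => derivation_apply_ι₃_mem hD hv)

theorem block_inf_derPow_le_comap (k : ℕ) :
    P.block (C¹ g1 ⊓ derPow g1 k) (C¹ g2 ⊓ derPow g2 k) ⊥ ≤
      (P.block (C¹ g1 ⊓ derPow g1 (k + 1)) (C¹ g2 ⊓ derPow g2 (k + 1)) ⊥).comap D :=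
  block_le_comap
    (fun _ hx => derivation_apply_ι₁_mem_block hD hS₁ hx.1
      ⟨(isDerivation_D11ₗ hD).map_mem_derivedSeries_one hx.1,
        (isDerivation_D11ₗ hD).mem_derPow_succ hx.2⟩)
    (fun _ hy => derivation_apply_ι₂_mem_block hD hS₂ hy.1
      ⟨(isDerivation_D22ₗ hD).map_mem_derivedSeries_one hy.1,
        (isDerivation_D22ₗ hD).mem_derPow_succ hy.2⟩)
    (by simp)

end Filtration

theorem characteristicallyNilpotent (hcn1 : CharacteristicallyNilpotent g1)
    (hcn2 : CharacteristicallyNilpotent g2)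
    (hS₁ : ∀ D, IsDerivation D → ∀ x, P.D21 D x ∈ C¹ g2)
    (hS₂ : ∀ D, IsDerivation D → ∀ y, P.D12 D y ∈ C¹ g1) :
    CharacteristicallyNilpotent L := by
  obtain ⟨m₁, hm₁, h₁⟩ := hcn1
  obtain ⟨m₂, -, h₂⟩ := hcn2
  set M := max m₁ m₂
  have hA : derPow g1 M = ⊥ := derPow_eq_bot_of_le h₁ (le_max_left _ _)
  have hB : derPow g2 M = ⊥ := derPow_eq_bot_of_le h₂ (le_max_right _ _)
  have stage₁ : derPow L M ≤ P.block (C¹ g1) (C¹ g2) ⊤ := by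
    simpa [hA, hB] using derPow_add_le (a := 0)
      (fun k D hD => block_derPow_sup_le_comap hD (hS₁ D hD) (hS₂ D hD) k) (by simp) M
  have stage₂ : derPow L (M + (m₁ + m₂)) ≤ P.block (C¹ g1) (C¹ g2) ⊥ := by
    simpa [P.cocycleFiltration_eq_bot h₁ h₂] using derPow_add_le (a := M)
      (fun k D hD => block_cocycleFiltration_le_comap hD (hS₁ D hD) (hS₂ D hD) k)
      (by simpa using stage₁) (m₁ + m₂)
  have stage₃ : derPow L (M + (m₁ + m₂) + M) ≤ ⊥ := by
    simpa [hA, hB] using derPow_add_le (a := M + (m₁ + m₂))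
      (fun k D hD => block_inf_derPow_le_comap hD (hS₁ D hD) (hS₂ D hD) k)
      (by simpa using stage₂) M
  exact ⟨M + (m₁ + m₂) + M, by omega, le_bot_iff.1 stage₃⟩

section Centroid

variable {P} {π : L →ₗ[ℂ] L}

theorem centroid_apply_ι₁_lie (hπ : IsCentroid π) (x x' : g1) :
    π (P.ι₁ ⁅x, x'⁆) = P.e (⁅P.D11 π x, x'⁆, 0, -P.Φ x' (P.D21 π x)) := by
  rw [← lie_ι₁_ι₁, hπ, apply_ι₁]
  simp only [ι₁, P.bracket_eq]
  congr 1
  ext <;> simp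

theorem isCentroid_D11ₗ (hπ : IsCentroid π) : IsCentroid (P.D11ₗ π) := fun x x' => by
  simp [D11, p₁, centroid_apply_ι₁_lie hπ]

theorem centroid_D21_eq_zero (hπ : IsCentroid π) {x : g1} (hx : x ∈ C¹ g1) : P.D21 π x = 0 := by
  rw [derivedSeries_one_eq_span] at hx
  refine LinearMap.eqOn_span (f := P.D21ₗ π) (g := 0) ?_ hx
  rintro _ ⟨a, b, rfl⟩
  simp [D21, p₂, centroid_apply_ι₁_lie hπ]

theorem centroid_apply_ι₃_Φ_left (hπ : IsCentroid π) (x : g1) (y : g2) :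
    π (P.ι₃ (P.Φ x y)) = P.e (0, ⁅P.D21 π x, y⁆, P.Φ (P.D11 π x) y) := by
  rw [← lie_ι₁_ι₂, hπ, apply_ι₁]
  simp only [ι₂, P.bracket_eq]
  congr 1
  ext <;> simp

theorem centroid_apply_ι₃_Φ_right (hπ : IsCentroid π) (x : g1) (y : g2) :
    π (P.ι₃ (P.Φ x y)) = P.e (⁅x, P.D12 π y⁆, 0, P.Φ x (P.D22 π y)) := by
  rw [← lie_ι₁_ι₂, hπ.map_lie_right, apply_ι₂]
  simp only [ι₁, P.bracket_eq]
  congr 1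
  ext <;> simp

theorem exists_centroid_apply_ι₃ (hπ : IsCentroid π) :
    ∃ μ : ℂ, ∀ v, π (P.ι₃ v) = P.ι₃ (μ • v) := by
  have hcomp : ∀ x y, ⁅P.D21 π x, y⁆ = 0 ∧ P.Φ (P.D11 π x) y = P.Φ x (P.D22 π y) := by
    intro x y
    have h := P.e.injective
      ((centroid_apply_ι₃_Φ_left hπ x y).symm.trans (centroid_apply_ι₃_Φ_right hπ x y))
    simp only [Prod.ext_iff] at h
    exact ⟨h.2.1, h.2.2⟩
  -- `Φ` is the outer product of the generator coordinates, so `Φ (D11 x) y = Φ x (D22 y)` forces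
  -- `D11` to act on the generator coordinates of `g1` as a scalar.
  have hn2 : 0 < P.n2 := by have := P.two_le_n2; omega
  set s₀ : Fin P.n2 := ⟨0, hn2⟩
  set y₀ := P.b2 (Fin.castLE P.n2_le s₀)
  set μ := P.b2.repr (P.D22 π y₀) (Fin.castLE P.n2_le s₀)
  have hcoord : ∀ x r, P.b1.repr (P.D11 π x) (Fin.castLE P.n1_le r) =
      μ * P.b1.repr x (Fin.castLE P.n1_le r) := fun x r => by
    simpa [Φ_apply, y₀, mul_comm] using congr_fun₂ (hcomp x y₀).2 r s₀
  have hΦ : ∀ x y, π (P.ι₃ (P.Φ x y)) = P.ι₃ (μ • P.Φ x y) := fun x y => by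
    rw [centroid_apply_ι₃_Φ_left hπ, (hcomp x y).1, ι₃]
    congr
    ext r s
    simp [Φ_apply, hcoord, mul_assoc]
  refine ⟨μ, fun v => ?_⟩
  have hspan : v ∈ span ℂ {v | ∃ x y, P.Φ x y = v} := P.span_Φ_eq_top ▸ mem_top
  refine LinearMap.eqOn_span (f := π ∘ₗ P.inc₃) (g := P.inc₃ ∘ₗ (μ • LinearMap.id)) ?_ hspan
  rintro _ ⟨x, y, rfl⟩
  simpa using hΦ x y

section Vanishing

variable (hπ : IsCentroid π) (h₃ : ∀ v, π (P.ι₃ v) = 0)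
include hπ h₃

theorem centroid_D11_mem (x : g1) : P.D11 π x ∈ C¹ g1 := by
  refine P.mem_derivedSeries_one_of_Φ_eq_zero (LinearMap.ext fun y => ?_)
  have h := centroid_apply_ι₃_Φ_left (P := P) hπ x y
  rw [h₃, eq_comm, LinearEquiv.map_eq_zero_iff] at h
  exact congrArg (fun t => t.2.2) h

theorem centroid_D11_eq_zero_of_eq_self [LieRing.IsNilpotent g1] {x : g1}
    (hx : P.D11 π x = x) : x = 0 :=
  (isCentroid_D11ₗ hπ).eq_zero_of_apply_eq_self (centroid_D11_mem hπ h₃) hx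

theorem centroid_apply_ι₁_eq_zero [LieRing.IsNilpotent g1] [LieRing.IsNilpotent g2]
    (hidem : IsIdempotentElem π) (x : g1) : π (P.ι₁ x) = 0 := by
  -- In `π (π (ι₁ x)) = π (ι₁ x)`, the `g2`-component of `π (ι₁ x)` is fixed by `D22 π`, then its
  -- `g1`-component by `D11 π`; both maps have no nonzero fixed points.
  have h := LinearMap.congr_fun hidem (P.ι₁ x)
  rw [Module.End.mul_apply, P.apply_ι₁ π x, e_eq_add, map_add, map_add, h₃, add_zero, apply_ι₁,
    apply_ι₂, ← map_add, ← e_eq_add] at h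
  obtain ⟨h₁, h₂, h₃'⟩ : _ ∧ _ ∧ _ := by simpa [Prod.ext_iff] using P.e.injective h
  rw [centroid_D21_eq_zero hπ (centroid_D11_mem hπ h₃ x), zero_add] at h₂
  have hb : P.D21 π x = 0 := P.swap.centroid_D11_eq_zero_of_eq_self hπ (fun w => h₃ _)
    (by rwa [swap_D11])
  have ha : P.D11 π x = 0 := centroid_D11_eq_zero_of_eq_self hπ h₃
    (by simpa [hb, D12, ι₂, p₁, Prod.mk_zero_zero] using h₁)
  have hc : P.D31 π x = 0 := by
    simpa [ha, hb, D31, D32, ι₁, ι₂, p₃, Prod.mk_zero_zero] using h₃'.symm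
  rw [P.apply_ι₁, ha, hb, hc]
  simp

theorem centroid_eq_zero [LieRing.IsNilpotent g1] [LieRing.IsNilpotent g2]
    (hidem : IsIdempotentElem π) : π = 0 := LinearMap.ext fun z => by
  rw [P.eq_add z, map_add, map_add, centroid_apply_ι₁_eq_zero hπ h₃ hidem, ← swap_ι₁,
    centroid_apply_ι₁_eq_zero (P := P.swap) hπ (fun w => h₃ _) hidem, h₃]
  simp

end Vanishing

end Centroid

include P in
theorem centroid_eq_zero_or_one [LieRing.IsNilpotent g1] [LieRing.IsNilpotent g2]
    {π : L →ₗ[ℂ] L} (hπ : IsCentroid π) (hidem : IsIdempotentElem π) : π = 0 ∨ π = 1 := by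
  obtain ⟨μ, hμ⟩ := exists_centroid_apply_ι₃ (P := P) hπ
  have hμ' : IsIdempotentElem μ := by
    have hn1 : 0 < P.n1 := by have := P.two_le_n1; omega
    have hn2 : 0 < P.n2 := by have := P.two_le_n2; omega
    have h := LinearMap.congr_fun hidem (P.ι₃ fun _ _ => 1)
    simp only [Module.End.mul_apply, hμ, smul_smul] at h
    exact (by simpa using congr_fun₂ (P.ι₃_injective h) ⟨0, hn1⟩ ⟨0, hn2⟩ : μ * μ = μ)
  rcases IsIdempotentElem.iff_eq_zero_or_one.1 hμ' with rfl | rfl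
  · exact Or.inl (centroid_eq_zero (P := P) hπ (fun v => by simp [hμ]) hidem)
  · refine Or.inr (sub_eq_zero.1 ?_).symm
    exact centroid_eq_zero (P := P) hπ.one_sub (fun v => by simp [hμ]) hidem.one_sub

include P in
theorem nonsplit [LieRing.IsNilpotent g1] [LieRing.IsNilpotent g2] :
    LieAlgebra.Nonsplit ℂ L := by
  rintro ⟨I, J, hI, hJ, hIJ, hIJ'⟩
  have h : IsCompl I.toSubmodule J.toSubmodule :=
    LieSubmodule.isCompl_toSubmodule.2 ⟨disjoint_iff.2 hIJ, codisjoint_iff.2 hIJ'⟩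
  rcases P.centroid_eq_zero_or_one (LieIdeal.isCentroid_projection h)
    (isIdempotentElem_projection h) with hπ | hπ
  · exact hI ((LieSubmodule.toSubmodule_eq_bot I).1 (by
      rw [← range_projection h, hπ, LinearMap.range_zero]))
  · exact hJ ((LieSubmodule.toSubmodule_eq_bot J).1 (by
      rw [← ker_projection h, hπ]; exact LinearMap.ker_id))

end IsProductByGenerators

theorem statement_15_general (L g1 g2 : Type) [LieRing L] [LieAlgebra ℂ L]
    [LieRing g1] [LieAlgebra ℂ g1] [LieRing g2] [LieAlgebra ℂ g2]
    [LieRing.IsNilpotent g1] [LieRing.IsNilpotent g2]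
    (hcn1 : CharacteristicallyNilpotent g1) (hcn2 : CharacteristicallyNilpotent g2)
    (hS1 : IsSAlgebra g1) (hS2 : IsSAlgebra g2)
    (P : IsProductByGenerators L g1 g2) :
    CharacteristicallyNilpotent L ∧ LieAlgebra.Nonsplit ℂ L :=
  ⟨P.characteristicallyNilpotent hcn1 hcn2 (fun D hD => hS1 g2 L _ _ _ _ P D hD)
    (fun D hD y => P.swap_D21 D y ▸ hS2 g1 L _ _ _ _ P.swap D hD y), P.nonsplit⟩

/-- the product by generators of two characteristically nilpotent Lie
S-algebras is characteristically nilpotent and nonsplit. -/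
theorem statement_15 (L g1 g2 : Type) [LieRing L] [LieAlgebra ℂ L]
    [LieRing g1] [LieAlgebra ℂ g1] [LieRing g2] [LieAlgebra ℂ g2]
    [FiniteDimensional ℂ g1] [FiniteDimensional ℂ g2]
    [LieRing.IsNilpotent g1] [LieRing.IsNilpotent g2]
    (hcn1 : CharacteristicallyNilpotent g1) (hcn2 : CharacteristicallyNilpotent g2)
    (hS1 : IsSAlgebra g1) (hS2 : IsSAlgebra g2)
    (P : IsProductByGenerators L g1 g2) :
    CharacteristicallyNilpotent L ∧ LieAlgebra.Nonsplit ℂ L :=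
  statement_15_general L g1 g2 hcn1 hcn2 hS1 hS2 P
end
end

section
/- Let g be a characteristically nilpotent S-algebra with k generators. Then for any n ≥ 1, the n-th power ×̲ⁿg = g ×̲ ... ×̲ g (n times) satisfies dim(×̲ⁿg) = (1/2)n²k² + (dim g − (1/2)k²)n and dim Z(×̲ⁿg) = (1/2)n²k² + (dim Z(g) − (1/2)k²)n. -/
open Module

noncomputable section

/-!
A central element `z` of `g` outside `[g, g]` is fixed by the derivation `x ↦ f x • z`, where
`f` is a functional vanishing on `[g, g]` with `f z = 1`; so `z` survives in every `g^{[m]}`, and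
the center of a characteristically nilpotent algebra lies in `[g, g]`. When this holds for both
factors, the cocycle of `g₁ ×̲ g₂` vanishes on the centers, which sit in the span of the
non-generator basis vectors, so `Z(g₁ ×̲ g₂) = Z(g₁) ⊕ Z(g₂) ⊕ ℂ^(n₁n₂)`; it again lies in the
derived algebra, since `ℂ^(n₁n₂)` is spanned by brackets of generators. Passing from `×̲ⁿg` to
`×̲ⁿ⁺¹g` thus adds `dim g + nk²` to the dimension and `dim Z(g) + nk²` to that of the center.
-/

open LieAlgebra

theorem Submodule.finrank_prod {K M N : Type*} [DivisionRing K] [AddCommGroup M] [Module K M]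
    [AddCommGroup N] [Module K N] [FiniteDimensional K M] [FiniteDimensional K N]
    (p : Submodule K M) (q : Submodule K N) :
    finrank K (p.prod q) = finrank K p + finrank K q := by
  have hinj : Function.Injective (p.subtype.prodMap q.subtype) :=
    p.injective_subtype.prodMap q.injective_subtype
  calc finrank K (p.prod q) = finrank K (p.subtype.prodMap q.subtype).range := by
        rw [LinearMap.range_prodMap, p.range_subtype, q.range_subtype]
    _ = finrank K (p × q) := LinearMap.finrank_range_of_inj hinj
    _ = finrank K p + finrank K q := Module.finrank_prod

theorem lie_mem_derivedSeries_one_s17 {R L : Type*} [CommRing R] [LieRing L] [LieAlgebra R L]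
    (x y : L) : ⁅x, y⁆ ∈ derivedSeries R L 1 := by
  rw [derivedSeries_def, derivedSeriesOfIdeal_succ, derivedSeriesOfIdeal_zero]
  exact LieSubmodule.lie_mem_lie (LieSubmodule.mem_top x) (LieSubmodule.mem_top y)

section

variable {L : Type*} [LieRing L] [LieAlgebra ℂ L]

theorem mem_derPow_of_apply_eq_self {D : L →ₗ[ℂ] L} (hD : IsDerivation D) {z : L}
    (hz : D z = z) (m : ℕ) : z ∈ derPow L m := by
  induction m with
  | zero => exact Submodule.mem_top
  | succ m ih => exact Submodule.subset_span ⟨D, hD, z, ih, hz.symm⟩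

theorem isDerivation_smulRight {f : L →ₗ[ℂ] ℂ} (hf : ∀ x y : L, f ⁅x, y⁆ = 0) {z : L}
    (hz : z ∈ center ℂ L) : IsDerivation (f.smulRight z) := by
  have hz' : ∀ x, ⁅x, z⁆ = 0 := (LieModule.mem_maxTrivSubmodule ℂ L L z).1 hz
  intro x y
  simp [hf, hz', ← lie_skew z]

theorem CharacteristicallyNilpotent.center_le_derivedSeries
    (hL : CharacteristicallyNilpotent L) : center ℂ L ≤ derivedSeries ℂ L 1 := by
  intro z hz
  by_contra hzd
  obtain ⟨f, hfz, hf⟩ := Submodule.exists_le_ker_of_notMem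
    (p := (derivedSeries ℂ L 1).toSubmodule) hzd
  have hf' (x y : L) : f ⁅x, y⁆ = 0 := hf (lie_mem_derivedSeries_one_s17 x y)
  have hD := isDerivation_smulRight (f := (f z)⁻¹ • f) (by simp [hf']) hz
  have hDz : ((f z)⁻¹ • f).smulRight z z = z := by simp [hfz]
  obtain ⟨m, -, hm⟩ := hL
  have hz0 := mem_derPow_of_apply_eq_self hD hDz m
  rw [hm, Submodule.mem_bot] at hz0
  exact hfz (by simp [hz0])

end

namespace IsProductByGenerators

variable {L g1 g2 : Type*} [LieRing L] [LieAlgebra ℂ L]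
  [LieRing g1] [LieAlgebra ℂ g1] [LieRing g2] [LieAlgebra ℂ g2]
  (P : IsProductByGenerators L g1 g2)

theorem Φ_eq_zero_of_mem_derivedSeries {x : g1} (hx : x ∈ derivedSeries ℂ g1 1) :
    P.Φ x = 0 := by
  have htail : Submodule.span ℂ (P.b1 '' {i | P.n1 ≤ (i : ℕ)}) ≤ LinearMap.ker P.Φ := by
    rw [Submodule.span_le]
    rintro _ ⟨i, hi : P.n1 ≤ (i : ℕ), rfl⟩
    exact P.b2.ext fun j => by simp [P.hΦ, hi.not_gt]
  exact htail (P.adapted1 hx)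

theorem Φ_apply_eq_zero_of_mem_derivedSeries (x : g1) {y : g2}
    (hy : y ∈ derivedSeries ℂ g2 1) : P.Φ x y = 0 := by
  have htail : Submodule.span ℂ (P.b2 '' {j | P.n2 ≤ (j : ℕ)}) ≤ LinearMap.ker P.Φ.flip := by
    rw [Submodule.span_le]
    rintro _ ⟨j, hj : P.n2 ≤ (j : ℕ), rfl⟩
    exact P.b1.ext fun i => by simp [P.hΦ, hj]
  exact LinearMap.congr_fun (htail (P.adapted2 hy)) x

def ι₁LieHom : g1 →ₗ⁅ℂ⁆ L :=
  { P.e.toLinearMap ∘ₗ LinearMap.inl ℂ g1 (g2 × (Fin P.n1 → Fin P.n2 → ℂ)) with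
    map_lie' := by simp [P.bracket_eq, Prod.mk_zero_zero] }

def ι₂LieHom : g2 →ₗ⁅ℂ⁆ L :=
  { P.e.toLinearMap ∘ₗ LinearMap.inr ℂ g1 (g2 × (Fin P.n1 → Fin P.n2 → ℂ)) ∘ₗ
      LinearMap.inl ℂ g2 (Fin P.n1 → Fin P.n2 → ℂ) with
    map_lie' := by simp [P.bracket_eq] }

def ι₃LinearMap : (Fin P.n1 → Fin P.n2 → ℂ) →ₗ[ℂ] L :=
  P.e.toLinearMap ∘ₗ LinearMap.inr ℂ g1 (g2 × (Fin P.n1 → Fin P.n2 → ℂ)) ∘ₗ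
    LinearMap.inr ℂ g2 (Fin P.n1 → Fin P.n2 → ℂ)

theorem ι₃LinearMap_apply (v : Fin P.n1 → Fin P.n2 → ℂ) : P.ι₃LinearMap v = P.ι₃ v := rfl

theorem e_eq_ι₁_add_ι₂_add_ι₃ (a : g1 × g2 × (Fin P.n1 → Fin P.n2 → ℂ)) :
    P.e a = P.ι₁ a.1 + P.ι₂ a.2.1 + P.ι₃ a.2.2 := by
  simp only [ι₁, ι₂, ι₃, ← map_add, Prod.mk_add_mk, add_zero, zero_add]

theorem ι₁_mem_derivedSeries {x : g1} (hx : x ∈ derivedSeries ℂ g1 1) :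
    P.ι₁ x ∈ derivedSeries ℂ L 1 :=
  LieIdeal.derivedSeries_map_le (f := P.ι₁LieHom) 1 (LieIdeal.mem_map hx)

theorem ι₂_mem_derivedSeries {y : g2} (hy : y ∈ derivedSeries ℂ g2 1) :
    P.ι₂ y ∈ derivedSeries ℂ L 1 :=
  LieIdeal.derivedSeries_map_le (f := P.ι₂LieHom) 1 (LieIdeal.mem_map hy)

theorem ι₃_single (i : Fin P.n1) (j : Fin P.n2) :
    P.ι₃ (Pi.single i (Pi.single j 1)) =
      ⁅P.ι₁ (P.b1 (Fin.castLE P.n1_le i)), P.ι₂ (P.b2 (Fin.castLE P.n2_le j))⁆ := by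
  have hΦ : P.Φ (P.b1 (Fin.castLE P.n1_le i)) (P.b2 (Fin.castLE P.n2_le j)) =
      Pi.single i (Pi.single j 1) := by
    rw [P.hΦ, dif_pos ⟨i.isLt, j.isLt⟩]
    rfl
  simp [ι₁, ι₂, ι₃, P.bracket_eq, hΦ]

theorem ι₃_mem_derivedSeries (v : Fin P.n1 → Fin P.n2 → ℂ) :
    P.ι₃ v ∈ derivedSeries ℂ L 1 := by
  have hzero : (derivedSeries ℂ L 1).toSubmodule.mkQ ∘ₗ P.ι₃LinearMap = 0 := by
    ext i j
    simp only [LinearMap.comp_apply, LinearMap.zero_apply, LinearMap.single_apply,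
      Submodule.mkQ_apply, Submodule.Quotient.mk_eq_zero, ι₃LinearMap_apply]
    exact P.ι₃_single i j ▸ lie_mem_derivedSeries_one_s17 _ _
  exact (Submodule.Quotient.mk_eq_zero _).1 (LinearMap.congr_fun hzero v)

theorem e_mem_center_iff (hZ1 : center ℂ g1 ≤ derivedSeries ℂ g1 1)
    (hZ2 : center ℂ g2 ≤ derivedSeries ℂ g2 1) (a : g1 × g2 × (Fin P.n1 → Fin P.n2 → ℂ)) :
    P.e a ∈ center ℂ L ↔ a.1 ∈ center ℂ g1 ∧ a.2.1 ∈ center ℂ g2 := by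
  simp only [center, LieModule.mem_maxTrivSubmodule, P.e.surjective.forall, P.bracket_eq,
    map_eq_zero_iff _ P.e.injective, Prod.mk_eq_zero]
  constructor
  · intro h
    exact ⟨fun x => (h (x, 0, 0)).1, fun y => (h (0, y, 0)).2.1⟩
  · rintro ⟨h1, h2⟩ a'
    refine ⟨h1 a'.1, h2 a'.2.1, ?_⟩
    rw [P.Φ_apply_eq_zero_of_mem_derivedSeries _ (hZ2 h2),
      P.Φ_eq_zero_of_mem_derivedSeries (hZ1 h1)]
    simp

include P in
theorem center_le_derivedSeries (hZ1 : center ℂ g1 ≤ derivedSeries ℂ g1 1)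
    (hZ2 : center ℂ g2 ≤ derivedSeries ℂ g2 1) : center ℂ L ≤ derivedSeries ℂ L 1 := by
  intro z hz
  obtain ⟨a, rfl⟩ := P.e.surjective z
  obtain ⟨h1, h2⟩ := (P.e_mem_center_iff hZ1 hZ2 a).1 hz
  rw [P.e_eq_ι₁_add_ι₂_add_ι₃]
  exact add_mem (add_mem (P.ι₁_mem_derivedSeries (hZ1 h1)) (P.ι₂_mem_derivedSeries (hZ2 h2)))
    (P.ι₃_mem_derivedSeries a.2.2)

theorem comap_center (hZ1 : center ℂ g1 ≤ derivedSeries ℂ g1 1)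
    (hZ2 : center ℂ g2 ≤ derivedSeries ℂ g2 1) :
    (center ℂ L).toSubmodule.comap P.e.toLinearMap =
      (center ℂ g1).toSubmodule.prod ((center ℂ g2).toSubmodule.prod ⊤) := by
  ext a
  simpa using P.e_mem_center_iff hZ1 hZ2 a

variable [FiniteDimensional ℂ g1] [FiniteDimensional ℂ g2]

theorem fdim_eq : fdim L = fdim g1 + fdim g2 + P.n1 * P.n2 := by
  simp [fdim, ← P.e.finrank_eq, add_assoc, Module.finrank_pi_fintype]

theorem zdim_eq (hZ1 : center ℂ g1 ≤ derivedSeries ℂ g1 1)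
    (hZ2 : center ℂ g2 ≤ derivedSeries ℂ g2 1) :
    zdim L = zdim g1 + zdim g2 + P.n1 * P.n2 := by
  rw [zdim, ← P.e.symm.finrank_map_eq, ← Submodule.comap_equiv_eq_map_symm,
    P.comap_center hZ1 hZ2, Submodule.finrank_prod, Submodule.finrank_prod, finrank_top]
  simp [zdim, add_assoc, Module.finrank_pi_fintype]

end IsProductByGenerators

namespace LieEquiv

section

variable {R A B : Type*} [CommRing R] [LieRing A] [LieAlgebra R A] [LieRing B] [LieAlgebra R B]

theorem map_mem_center_iff (f : A ≃ₗ⁅R⁆ B) {x : A} : f x ∈ center R B ↔ x ∈ center R A := by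
  simp only [center, LieModule.mem_maxTrivSubmodule, (EquivLike.surjective f).forall,
    ← f.map_lie, map_eq_zero_iff _ (EquivLike.injective f)]

theorem center_le_derivedSeries (f : A ≃ₗ⁅R⁆ B) (hB : center R B ≤ derivedSeries R B 1) :
    center R A ≤ derivedSeries R A 1 := by
  intro x hx
  simpa using LieIdeal.derivedSeries_map_le (f := (f.symm : B →ₗ⁅R⁆ A)) 1
    (LieIdeal.mem_map (hB (f.map_mem_center_iff.2 hx)))

end

variable {A B : Type*} [LieRing A] [LieAlgebra ℂ A] [LieRing B] [LieAlgebra ℂ B]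

theorem fdim_eq (f : A ≃ₗ⁅ℂ⁆ B) : fdim A = fdim B := f.toLinearEquiv.finrank_eq

theorem zdim_eq (f : A ≃ₗ⁅ℂ⁆ B) : zdim A = zdim B := by
  have hcenter : (center ℂ A).toSubmodule =
      (center ℂ B).toSubmodule.comap f.toLinearEquiv.toLinearMap := by
    ext
    exact f.map_mem_center_iff.symm
  rw [zdim, zdim, hcenter, Submodule.comap_equiv_eq_map_symm, LinearEquiv.finrank_map_eq]

end LieEquiv

theorem two_mul_add_eq_of_recurrence (d : ℕ → ℕ) (c k : ℕ) (h1 : d 1 = c)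
    (hs : ∀ n, d (n + 2) = d (n + 1) + c + (n + 1) * k * k) (n : ℕ) (hn : 1 ≤ n) :
    2 * d n + n * k ^ 2 = n ^ 2 * k ^ 2 + 2 * n * c := by
  induction n, hn using Nat.le_induction with
  | base => rw [h1]; ring
  | succ n hn ih =>
    obtain ⟨m, rfl⟩ := Nat.exists_eq_add_of_le' hn
    rw [hs m]
    nlinarith [ih]

/-- `×̲ⁿ g` is realized by the chain `h` with `h 1 ≅ g` and `h (n + 2) = h (n + 1) ×̲ g`;
the formulas are multiplied by 2 to stay in `ℕ`. -/
theorem statement_17_general (g : Type) [LieRing g] [LieAlgebra ℂ g]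
    [FiniteDimensional ℂ g] (hcn : CharacteristicallyNilpotent g) (k : ℕ)
    (h : ℕ → Type) (iR : ∀ n, LieRing (h n)) (iA : ∀ n, @LieAlgebra ℂ (h n) _ (iR n))
    (hbase : @LieIso (h 1) g (iR 1) (iA 1) _ _)
    (P : ∀ n : ℕ, @IsProductByGenerators (h (n + 2)) (h (n + 1)) g
      (iR (n + 2)) (iA (n + 2)) (iR (n + 1)) (iA (n + 1)) _ _)
    -- at each step the two factors have `(n+1)k` and `k` generators respectively
    (hP1 : ∀ n, (P n).n1 = (n + 1) * k) (hP2 : ∀ n, (P n).n2 = k) :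
    ∀ n : ℕ, 1 ≤ n →
      2 * @fdim (h n) (iR n) (iA n) + n * k ^ 2 = n ^ 2 * k ^ 2 + 2 * n * fdim g ∧
      2 * @zdim (h n) (iR n) (iA n) + n * k ^ 2 = n ^ 2 * k ^ 2 + 2 * n * zdim g := by
  have hZg := hcn.center_le_derivedSeries
  obtain ⟨f⟩ := hbase
  have hpow (n : ℕ) : let := iR (n + 1); let := iA (n + 1)
      FiniteDimensional ℂ (h (n + 1)) ∧
        center ℂ (h (n + 1)) ≤ derivedSeries ℂ (h (n + 1)) 1 := by
    induction n with
    | zero => exact ⟨Module.Finite.equiv f.symm.toLinearEquiv, f.center_le_derivedSeries hZg⟩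
    | succ n ih =>
      let := iR (n + 1); let := iA (n + 1)
      obtain ⟨_, hZ⟩ := ih
      exact ⟨Module.Finite.equiv (P n).e, (P n).center_le_derivedSeries hZ hZg⟩
  intro n hn
  constructor
  · refine two_mul_add_eq_of_recurrence (fun n => @fdim (h n) (iR n) (iA n)) _ k f.fdim_eq
      (fun m => ?_) n hn
    let := iR (m + 1); let := iA (m + 1)
    have := (hpow m).1
    simp only [(P m).fdim_eq, hP1, hP2]
  · refine two_mul_add_eq_of_recurrence (fun n => @zdim (h n) (iR n) (iA n)) _ k f.zdim_eq
      (fun m => ?_) n hn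
    let := iR (m + 1); let := iA (m + 1)
    have := (hpow m).1
    simp only [(P m).zdim_eq (hpow m).2 hZg, hP1, hP2]

/-- for a characteristically nilpotent S-algebra `g` with `k` generators,
the `n`-th power `×̲ⁿ g` (realized by the chain `h` with `h 1 ≅ g`,
`h (n+1) = h n ×̲ g`) satisfies
`dim(×̲ⁿg) = ½n²k² + (dim g − ½k²)n` and
`dim Z(×̲ⁿg) = ½n²k² + (dim Z(g) − ½k²)n`
(stated multiplied by 2 to avoid fractions). -/
theorem statement_17 (g : Type) [LieRing g] [LieAlgebra ℂ g]
    [FiniteDimensional ℂ g] [LieRing.IsNilpotent g]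
    (hcn : CharacteristicallyNilpotent g) (hS : IsSAlgebra g)
    (k : ℕ) (hk : gdim g = k)
    (h : ℕ → Type) (iR : ∀ n, LieRing (h n)) (iA : ∀ n, @LieAlgebra ℂ (h n) _ (iR n))
    (hbase : @LieIso (h 1) g (iR 1) (iA 1) _ _)
    (P : ∀ n : ℕ, @IsProductByGenerators (h (n + 2)) (h (n + 1)) g
      (iR (n + 2)) (iA (n + 2)) (iR (n + 1)) (iA (n + 1)) _ _)
    -- at each step the two factors have `(n+1)k` and `k` generators respectively
    (hP1 : ∀ n, (P n).n1 = (n + 1) * k) (hP2 : ∀ n, (P n).n2 = k) :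
    ∀ n : ℕ, 1 ≤ n →
      2 * @fdim (h n) (iR n) (iA n) + n * k ^ 2 = n ^ 2 * k ^ 2 + 2 * n * fdim g ∧
      2 * @zdim (h n) (iR n) (iA n) + n * k ^ 2 = n ^ 2 * k ^ 2 + 2 * n * zdim g :=
  statement_17_general g hcn k h iR iA hbase P hP1 hP2
end
end
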